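/- Let α > 0 and q ≥ 2, and let K ⊂ ℝⁿ be a centrally symmetric compact convex set with nonempty interior that is smooth and (α,q)-uniformly convex with respect to ‖·‖_K. For d₁, d₂ ∈ ∂K°, let x₁, x₂ ∈ ∂K be the (unique) maximizers x_i ∈ argmax_{x ∈ K} ⟨d_i, x⟩, i.e., x_i = ∇‖·‖_{K°}(d_i). Then ⟨d₁ − d₂, x₁ − x₂⟩ ≥ (2α/q)‖x₁ − x₂‖_K^q, and consequently ‖∇‖·‖_{K°}(d₁) − ∇‖·‖_{K°}(d₂)‖_K ≤ (q/(2α))^{1/(q−1)} · ‖d₁ − d₂‖_{K°}^{1/(q−1)}. -/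

import Mathlib

open scoped InnerProductSpace
open scoped Pointwise
open MeasureTheory

noncomputable section

abbrev Euc (n : ℕ) := EuclideanSpace ℝ (Fin n)

/-- The polar set `K° = {d | ⟪d, x⟫ ≤ 1 for all x ∈ K}`. -/
def polarSet {n : ℕ} (K : Set (Euc n)) : Set (Euc n) := {d | ∀ x ∈ K, ⟪d, x⟫_ℝ ≤ 1}

/-- The normal cone of `K` at `y`. -/
def normalCone {n : ℕ} (K : Set (Euc n)) (y : Euc n) : Set (Euc n) :=
  {d | ∀ x ∈ K, 0 ≤ ⟪d, y - x⟫_ℝ}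

/-- A set is smooth if at each boundary point there is exactly one normal direction in `∂K°`. -/
def SmoothSet {n : ℕ} (K : Set (Euc n)) : Prop :=
  ∀ x ∈ frontier K, ∃! d, d ∈ normalCone K x ∩ frontier (polarSet K)

/-- A set is strictly convex if the midpoint of two distinct boundary points is interior. -/
def StrictlyConvexSet {n : ℕ} (K : Set (Euc n)) : Prop :=
  ∀ x₁ ∈ frontier K, ∀ x₂ ∈ frontier K, x₁ ≠ x₂ → midpoint ℝ x₁ x₂ ∈ interior K

/-- `(α, q)`-uniform convexity of a set w.r.t. its gauge. -/
def UniformlyConvexSet {n : ℕ} (K : Set (Euc n)) (α q : ℝ) : Prop :=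
  ∀ x ∈ K, ∀ y ∈ K, ∀ z ∈ K, ∀ γ ∈ Set.Icc (0:ℝ) 1,
    γ • x + (1 - γ) • y + (α / q * (γ * (1 - γ)) * gauge K (x - y) ^ q) • z ∈ K

/-- The barrier function `F_K(x) = -ln(1 - ‖x‖_K) - ‖x‖_K`. -/
def FK {n : ℕ} (K : Set (Euc n)) (x : Euc n) : ℝ := -Real.log (1 - gauge K x) - gauge K x

/-- Fenchel conjugate of the barrier `F_K` (defined on `D_K = {‖x‖_K < 1}`). -/
def FstarK {n : ℕ} (K : Set (Euc n)) (d : Euc n) : ℝ :=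
  sSup ((fun x => ⟪x, d⟫_ℝ - FK K x) '' {x | gauge K x < 1})

/-- Bregman divergence `D_F(u, v) = F(u) - F(v) - ⟪∇F(v), u - v⟫`. -/
def breg {n : ℕ} (F : Euc n → ℝ) (u v : Euc n) : ℝ :=
  F u - F v - ⟪gradient F v, u - v⟫_ℝ

def l1Ball {n : ℕ} (r : ℝ) : Set (Euc n) := {x | ∑ i, |x i| ≤ r}
def linfBall {n : ℕ} (R : ℝ) : Set (Euc n) := {x | ∀ i, |x i| ≤ R}
def l2Ball {n : ℕ} (r : ℝ) : Set (Euc n) := Metric.closedBall 0 r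
def lqBall {n : ℕ} (q r : ℝ) : Set (Euc n) := {x | ∑ i, |x i| ^ q ≤ r ^ q}

/-! Plugging `x = z = x₁`, `y = x₂` into the uniform convexity of `K` and comparing with the
maximality of `x₁` for `⟪d₁, ·⟫` (where `⟪d₁, x₁⟫ = 1` because `d₁ ∈ ∂K°`) gives
`γ (α/q) ‖x₁ - x₂‖_K^q ≤ ⟪d₁, x₁ - x₂⟫` for every `γ < 1`, hence for `γ = 1`. Adding the same bound
with the roles of the indices swapped gives the first claim; the Hölder bound then follows from the
generalised Cauchy–Schwarz inequality `⟪u, x⟫ ≤ ‖u‖_{K°} ‖x‖_K`. -/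

open Filter Topology

section Gauge

variable {E : Type*} [NormedAddCommGroup E] [InnerProductSpace ℝ E]

theorem inner_le_gauge_mul_gauge {s t : Set E} (hs : Absorbent ℝ s) (ht : Absorbent ℝ t)
    (hst : ∀ v ∈ s, ∀ w ∈ t, ⟪v, w⟫_ℝ ≤ 1) (u x : E) :
    ⟪u, x⟫_ℝ ≤ gauge s u * gauge t x := by
  have hbound : ∀ ε > 0, ⟪u, x⟫_ℝ ≤ (gauge s u + ε) * (gauge t x + ε) := by
    intro ε hε
    obtain ⟨a, ha₀, ha, v, hv, rfl⟩ := exists_lt_of_gauge_lt hs (lt_add_of_pos_right (gauge s u) hε)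
    obtain ⟨b, hb₀, hb, w, hw, rfl⟩ := exists_lt_of_gauge_lt ht (lt_add_of_pos_right (gauge t x) hε)
    calc ⟪a • v, b • w⟫_ℝ = a * b * ⟪v, w⟫_ℝ := by
          rw [real_inner_smul_left, real_inner_smul_right, mul_assoc]
      _ ≤ a * b := mul_le_of_le_one_right (by positivity) (hst v hv w hw)
      _ ≤ _ := mul_le_mul ha.le hb.le hb₀.le (ha₀.trans ha).le
  have hlim : Tendsto (fun ε => (gauge s u + ε) * (gauge t x + ε)) (𝓝[>] 0)
      (𝓝 (gauge s u * gauge t x)) := by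
    refine tendsto_nhdsWithin_of_tendsto_nhds ((Continuous.tendsto' ?_ 0 _ (by simp)))
    fun_prop
  exact ge_of_tendsto hlim (eventually_nhdsWithin_of_forall hbound)

theorem zero_mem_interior_of_convex_of_neg_mem {K : Set E} (hconv : Convex ℝ K)
    (hsymm : ∀ x ∈ K, -x ∈ K) (hint : (interior K).Nonempty) : (0 : E) ∈ interior K := by
  obtain ⟨y, hy⟩ := hint
  simpa using hconv.combo_interior_self_mem_interior hy (hsymm y (interior_subset hy))
    (by norm_num : (0 : ℝ) < 1 / 2) (by norm_num : (0 : ℝ) ≤ 1 / 2) (by norm_num)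

end Gauge

theorem le_inv_rpow_mul_rpow_of_mul_rpow_le_mul_self {c A g p : ℝ} (hc : 0 < c) (hp : 1 < p)
    (hA : 0 ≤ A) (hg : 0 ≤ g) (h : c * g ^ p ≤ A * g) :
    g ≤ c⁻¹ ^ (1 / (p - 1)) * A ^ (1 / (p - 1)) := by
  rcases hg.eq_or_lt with rfl | hg₀
  · positivity
  have hpow : g ^ (p - 1) ≤ c⁻¹ * A := by
    rwa [Real.rpow_sub_one hg₀.ne', le_inv_mul_iff₀ hc, ← mul_div_assoc, div_le_iff₀ hg₀]
  rwa [← Real.mul_rpow (by positivity) hA, one_div,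
    Real.le_rpow_inv_iff_of_pos hg (by positivity) (sub_pos.2 hp)]

section Polar

variable {n : ℕ} {K : Set (Euc n)}

theorem isClosed_polarSet (K : Set (Euc n)) : IsClosed (polarSet K) := by
  simp only [polarSet, Set.ofPred_forall]
  exact isClosed_iInter fun x => isClosed_iInter fun _ =>
    isClosed_le (continuous_id.inner continuous_const) continuous_const

theorem polarSet_mem_nhds_zero (hK : Bornology.IsBounded K) : polarSet K ∈ 𝓝 (0 : Euc n) := by
  obtain ⟨R, hR, hKR⟩ := hK.subset_closedBall_lt 0 0
  refine mem_of_superset (Metric.ball_mem_nhds 0 (inv_pos.2 hR)) fun d hd x hx => ?_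
  rw [mem_ball_zero_iff] at hd
  have hx' : ‖x‖ ≤ R := mem_closedBall_zero_iff.1 (hKR hx)
  calc ⟪d, x⟫_ℝ ≤ ‖d‖ * ‖x‖ := real_inner_le_norm d x
    _ ≤ R⁻¹ * R := mul_le_mul hd.le hx' (norm_nonneg x) (by positivity)
    _ = 1 := inv_mul_cancel₀ hR.ne'

theorem inner_eq_one_of_mem_frontier_polarSet (hK : Bornology.IsBounded K) {d y : Euc n}
    (hd : d ∈ frontier (polarSet K)) (hy : y ∈ K) (hmax : IsMaxOn (fun x => ⟪d, x⟫_ℝ) K y) :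
    ⟪d, y⟫_ℝ = 1 := by
  set s := ⟪d, y⟫_ℝ
  have hs : s ≤ 1 := (isClosed_polarSet K).frontier_subset hd y hy
  refine hs.antisymm (not_lt.1 fun hs₁ => hd.2 (mem_interior_iff_mem_nhds.2 ?_))
  -- `d + (1 - s) • K°` is a neighbourhood of `d` inside `K°`
  have hcont : Continuous fun d' : Euc n => (1 - s)⁻¹ • (d' - d) := by fun_prop
  have hnhds := hcont.continuousAt.preimage_mem_nhds (x := d)
    (by simpa using polarSet_mem_nhds_zero hK)
  refine mem_of_superset hnhds fun d' hd' x hx => ?_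
  have hsplit : ⟪d', x⟫_ℝ = ⟪d, x⟫_ℝ + (1 - s) * ⟪(1 - s)⁻¹ • (d' - d), x⟫_ℝ := by
    rw [real_inner_smul_left, ← mul_assoc, mul_inv_cancel₀ (sub_pos.2 hs₁).ne', one_mul,
      inner_sub_left]
    ring
  have h₁ : ⟪d, x⟫_ℝ ≤ s := hmax hx
  have h₂ := mul_le_mul_of_nonneg_left (hd' x hx) (sub_pos.2 hs₁).le
  linarith

end Polar

theorem UniformlyConvexSet.mul_gauge_rpow_le_inner_sub {n : ℕ} {K : Set (Euc n)} {α q : ℝ}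
    (huc : UniformlyConvexSet K α q) {d y z : Euc n} (hy : y ∈ K) (hz : z ∈ K)
    (hmax : IsMaxOn (fun x => ⟪d, x⟫_ℝ) K y) (hdy : ⟪d, y⟫_ℝ = 1) :
    α / q * gauge K (y - z) ^ q ≤ ⟪d, y - z⟫_ℝ := by
  set c := α / q * gauge K (y - z) ^ q
  have hγ : ∀ γ ∈ Set.Ioo (0 : ℝ) 1, γ * c ≤ ⟪d, y - z⟫_ℝ := by
    rintro γ ⟨hγ₀, hγ₁⟩
    have hle := hmax (huc y hy z hz y hy γ ⟨hγ₀.le, hγ₁.le⟩)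
    simp only [Set.mem_ofPred_eq, inner_add_right, real_inner_smul_right, hdy] at hle
    rw [inner_sub_right, hdy]
    refine le_of_mul_le_mul_left ?_ (sub_pos.2 hγ₁)
    linear_combination hle
  have hlim : Tendsto (fun γ => γ * c) (𝓝[<] 1) (𝓝 c) := by
    refine tendsto_nhdsWithin_of_tendsto_nhds ((Continuous.tendsto' ?_ 1 _ (one_mul c)))
    fun_prop
  exact le_of_tendsto hlim (eventually_of_mem (Ioo_mem_nhdsLT one_pos) hγ)

theorem gauge_polar_gradient_holder_on_sphere_general {n : ℕ}
    (K : Set (Euc n)) (hKcomp : IsCompact K) (hKconv : Convex ℝ K)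
    (hKsymm : ∀ x ∈ K, -x ∈ K) (hKint : (interior K).Nonempty)
    (α q : ℝ) (hα : 0 < α) (hq : 2 ≤ q)
    (huc : UniformlyConvexSet K α q)
    (d₁ d₂ : Euc n)
    (hd₁ : d₁ ∈ frontier (polarSet K)) (hd₂ : d₂ ∈ frontier (polarSet K))
    (x₁ x₂ : Euc n)
    (hx₁ : x₁ ∈ frontier K) (hx₂ : x₂ ∈ frontier K)
    (hmax₁ : IsMaxOn (fun x => ⟪d₁, x⟫_ℝ) K x₁)
    (hmax₂ : IsMaxOn (fun x => ⟪d₂, x⟫_ℝ) K x₂) :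
    ⟪d₁ - d₂, x₁ - x₂⟫_ℝ ≥ 2 * α / q * gauge K (x₁ - x₂) ^ q ∧
    gauge K (x₁ - x₂)
      ≤ (q / (2 * α)) ^ (1 / (q - 1)) * gauge (polarSet K) (d₁ - d₂) ^ (1 / (q - 1)) := by
  have hx₁K := hKcomp.isClosed.frontier_subset hx₁
  have hx₂K := hKcomp.isClosed.frontier_subset hx₂
  have h₁ := huc.mul_gauge_rpow_le_inner_sub hx₁K hx₂K hmax₁
    (inner_eq_one_of_mem_frontier_polarSet hKcomp.isBounded hd₁ hx₁K hmax₁)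
  have h₂ := huc.mul_gauge_rpow_le_inner_sub hx₂K hx₁K hmax₂
    (inner_eq_one_of_mem_frontier_polarSet hKcomp.isBounded hd₂ hx₂K hmax₂)
  rw [← neg_sub x₁ x₂, gauge_neg hKsymm, inner_neg_right] at h₂
  have hmono : 2 * α / q * gauge K (x₁ - x₂) ^ q ≤ ⟪d₁ - d₂, x₁ - x₂⟫_ℝ := by
    rw [inner_sub_left]
    linear_combination h₁ + h₂
  have hK₀ : K ∈ 𝓝 0 :=
    mem_interior_iff_mem_nhds.1 (zero_mem_interior_of_convex_of_neg_mem hKconv hKsymm hKint)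
  have hCS := inner_le_gauge_mul_gauge
    (absorbent_nhds_zero (polarSet_mem_nhds_zero hKcomp.isBounded)) (absorbent_nhds_zero hK₀)
    (fun d hd x hx => hd x hx) (d₁ - d₂) (x₁ - x₂)
  refine ⟨hmono, ?_⟩
  rw [← inv_div]
  exact le_inv_rpow_mul_rpow_of_mul_rpow_le_mul_self (by positivity) (by linarith)
    (gauge_nonneg _) (gauge_nonneg _) (hmono.trans hCS)

/-- For `d₁, d₂ ∈ ∂K°` with (unique) maximizers `x₁, x₂ ∈ ∂K` of
`⟪dᵢ, ·⟫` over `K` (i.e. `xᵢ = ∇‖·‖_{K°}(dᵢ)`), one has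
`⟪d₁ - d₂, x₁ - x₂⟫ ≥ (2α/q)‖x₁ - x₂‖_K^q` and hence a Hölder bound on `x₁ - x₂`. -/
theorem gauge_polar_gradient_holder_on_sphere {n : ℕ}
    (K : Set (Euc n)) (hKcomp : IsCompact K) (hKconv : Convex ℝ K)
    (hKsymm : ∀ x ∈ K, -x ∈ K) (hKint : (interior K).Nonempty)
    (hsmooth : SmoothSet K)
    (α q : ℝ) (hα : 0 < α) (hq : 2 ≤ q)
    (huc : UniformlyConvexSet K α q)
    (d₁ d₂ : Euc n)
    (hd₁ : d₁ ∈ frontier (polarSet K)) (hd₂ : d₂ ∈ frontier (polarSet K))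
    (x₁ x₂ : Euc n)
    (hx₁ : x₁ ∈ frontier K) (hx₂ : x₂ ∈ frontier K)
    (hmax₁ : IsMaxOn (fun x => ⟪d₁, x⟫_ℝ) K x₁)
    (hmax₂ : IsMaxOn (fun x => ⟪d₂, x⟫_ℝ) K x₂)
    (hgrad₁ : gradient (gauge (polarSet K)) d₁ = x₁)
    (hgrad₂ : gradient (gauge (polarSet K)) d₂ = x₂) :
    ⟪d₁ - d₂, x₁ - x₂⟫_ℝ ≥ 2 * α / q * gauge K (x₁ - x₂) ^ q ∧
    gauge K (x₁ - x₂)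
      ≤ (q / (2 * α)) ^ (1 / (q - 1)) * gauge (polarSet K) (d₁ - d₂) ^ (1 / (q - 1)) :=
  gauge_polar_gradient_holder_on_sphere_general K hKcomp hKconv hKsymm hKint α q hα hq huc d₁ d₂ hd₁
    hd₂ x₁ x₂ hx₁ hx₂ hmax₁ hmax₂
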